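/- arXiv:2302.13951 — 7 statements merged into one kernel-verified Lean document; each statement's English description precedes it below -/
import Mathlib

section
/- Let A ⊆ M be a subset, f: A → ℝ a 1-Lipschitz function, and x ∈ M. Then E⁻f(x) = E⁺f(x) (equivalently, all 1-Lipschitz extensions of f take the same value at x) if and only if for every ε > 0 there exist p, q ∈ A with f(p) − f(q) > d(p,q) − ε and d(p,x) + d(x,q) < d(p,q) + ε. -/
noncomputable def supConv {M : Type*} [MetricSpace M] (A : Set M) (f : M → ℝ) (x : M) : ℝ :=
  ⨆ p : A, (f p - dist (p : M) x)

noncomputable def infConv {M : Type*} [MetricSpace M] (A : Set M) (f : M → ℝ) (x : M) : ℝ :=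
  ⨅ p : A, (f p + dist (p : M) x)

theorem stmt2 {M : Type*} [MetricSpace M] (A : Set M) (hA : A.Nonempty)
    (f : M → ℝ) (hf : ∀ p ∈ A, ∀ q ∈ A, |f p - f q| ≤ dist p q) (x : M) :
    supConv A f x = infConv A f x ↔
      ∀ ε > 0, ∃ p ∈ A, ∃ q ∈ A,
        f p - f q > dist p q - ε ∧ dist p x + dist x q < dist p q + ε := by
  haveI : Nonempty A := hA.to_subtype
  obtain ⟨p0, hp0⟩ := hA
  have hpq : ∀ p : A, ∀ q : A, f p - f q ≤ dist (p : M) q := by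
    intro p q
    exact (abs_le.1 (hf p p.2 q q.2)).2
  have hbdd : BddAbove (Set.range fun p : A => f p - dist (p : M) x) := by
    refine ⟨f p0 + dist p0 x, ?_⟩
    rintro _ ⟨p, rfl⟩
    have h1 := hpq p ⟨p0, hp0⟩
    have h2 := dist_triangle (p : M) x p0
    have h3 : dist (p : M) p0 = dist p0 (p : M) := dist_comm _ _
    have h4 : dist x p0 = dist p0 x := dist_comm _ _
    simp only [] at h1 ⊢
    linarith [dist_triangle (p : M) x p0]
  have hbdd' : BddBelow (Set.range fun p : A => f p + dist (p : M) x) := by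
    refine ⟨f p0 - dist p0 x, ?_⟩
    rintro _ ⟨p, rfl⟩
    have h1 := hpq ⟨p0, hp0⟩ p
    have h2 := dist_triangle p0 x (p : M)
    have h3 : dist p0 (p : M) = dist (p : M) p0 := dist_comm _ _
    have h4 : dist x (p : M) = dist (p : M) x := dist_comm _ _
    simp only [] at h1 ⊢
    linarith
  have hle : supConv A f x ≤ infConv A f x := by
    apply ciSup_le
    intro p
    apply le_ciInf
    intro q
    have h1 := hpq p q
    have h2 := dist_triangle (p : M) x q
    have h3 : dist x (q : M) = dist (q : M) x := dist_comm _ _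
    linarith
  constructor
  · intro h ε hε
    have h1 : supConv A f x - ε / 2 < supConv A f x := by linarith
    obtain ⟨p, hp⟩ := exists_lt_of_lt_ciSup h1
    have h2 : infConv A f x < infConv A f x + ε / 2 := by linarith
    obtain ⟨q, hq⟩ := exists_lt_of_ciInf_lt h2
    refine ⟨p, p.2, q, q.2, ?_, ?_⟩
    · have h3 := hpq p q
      have h4 := dist_triangle (p : M) x q
      have h5 : dist x (q : M) = dist (q : M) x := dist_comm _ _
      linarith [h.symm ▸ hp, hq]
    · have h3 := hpq p q
      have h5 : dist x (q : M) = dist (q : M) x := dist_comm _ _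
      have hp' : supConv A f x - ε / 2 < f p - dist (p : M) x := hp
      rw [h] at hp'
      linarith
  · intro h
    apply le_antisymm hle
    apply le_of_forall_pos_le_add
    intro ε hε
    obtain ⟨p, hp, q, hq, h1, h2⟩ := h (ε / 2) (by linarith)
    have h3 : infConv A f x ≤ f q + dist q x := ciInf_le hbdd' ⟨q, hq⟩
    have h4 : f p - dist p x ≤ supConv A f x := le_ciSup hbdd ⟨p, hp⟩
    have h5 : dist x q = dist q x := dist_comm _ _
    linarith
end

section
/- Let A ⊆ M be a compact subset, f: A → ℝ a 1-Lipschitz function, and x ∈ M a point at which all 1-Lipschitz extensions of f to M take the same value. Then there exist p, q ∈ A with f(p) − f(q) = d(p,q) and d(p,x) + d(x,q) = d(p,q). -/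
theorem stmt3 {M : Type*} [MetricSpace M] (A : Set M) (hA : A.Nonempty)
    (hAc : IsCompact A)
    (f : M → ℝ) (hf : ∀ p ∈ A, ∀ q ∈ A, |f p - f q| ≤ dist p q) (x : M)
    (hx : ∀ F G : M → ℝ, LipschitzWith 1 F → (∀ a ∈ A, F a = f a) →
      LipschitzWith 1 G → (∀ a ∈ A, G a = f a) → F x = G x) :
    ∃ p ∈ A, ∃ q ∈ A, f p - f q = dist p q ∧ dist p x + dist x q = dist p q := by
  have hfc : ContinuousOn f A := by
    apply LipschitzOnWith.continuousOn (K := 1)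
    intro a ha b hb
    rw [edist_dist, edist_dist, Real.dist_eq]
    calc ENNReal.ofReal |f a - f b| ≤ ENNReal.ofReal (dist a b) :=
          ENNReal.ofReal_le_ofReal (hf a ha b hb)
      _ ≤ 1 * ENNReal.ofReal (dist a b) := by rw [one_mul]
  -- inf-convolution
  set g1 : M → ℝ := fun y => sInf ((fun a => f a + dist y a) '' A) with hg1def
  set g2 : M → ℝ := fun y => sSup ((fun a => f a - dist y a) '' A) with hg2def
  have hmin : ∀ y : M, ∃ q ∈ A, IsLeast ((fun a => f a + dist y a) '' A) (f q + dist y q) := by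
    intro y
    have hc : ContinuousOn (fun a => f a + dist y a) A :=
      hfc.add ((Continuous.dist continuous_const continuous_id).continuousOn)
    obtain ⟨q, hqA, hq⟩ := hAc.exists_isMinOn hA hc
    exact ⟨q, hqA, Set.mem_image_of_mem _ hqA, by
      rintro _ ⟨a, haA, rfl⟩; exact hq haA⟩
  have hmax : ∀ y : M, ∃ p ∈ A, IsGreatest ((fun a => f a - dist y a) '' A) (f p - dist y p) := by
    intro y
    have hc : ContinuousOn (fun a => f a - dist y a) A :=
      hfc.sub ((Continuous.dist continuous_const continuous_id).continuousOn)
    obtain ⟨p, hpA, hp⟩ := hAc.exists_isMaxOn hA hc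
    exact ⟨p, hpA, Set.mem_image_of_mem _ hpA, by
      rintro _ ⟨a, haA, rfl⟩; exact hp haA⟩
  have hg1val : ∀ y : M, ∃ q ∈ A, g1 y = f q + dist y q ∧
      ∀ a ∈ A, f q + dist y q ≤ f a + dist y a := by
    intro y
    obtain ⟨q, hqA, hq⟩ := hmin y
    exact ⟨q, hqA, hq.csInf_eq, fun a ha => hq.2 (Set.mem_image_of_mem _ ha)⟩
  have hg2val : ∀ y : M, ∃ p ∈ A, g2 y = f p - dist y p ∧
      ∀ a ∈ A, f a - dist y a ≤ f p - dist y p := by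
    intro y
    obtain ⟨p, hpA, hp⟩ := hmax y
    exact ⟨p, hpA, hp.csSup_eq, fun a ha => hp.2 (Set.mem_image_of_mem _ ha)⟩
  have hg1lip : LipschitzWith 1 g1 := by
    apply LipschitzWith.of_le_add
    intro y z
    obtain ⟨q, hqA, hval, hlb⟩ := hg1val z
    obtain ⟨q', hq'A, hval', hlb'⟩ := hg1val y
    rw [hval, hval']
    calc f q' + dist y q' ≤ f q + dist y q := hlb' q hqA
      _ ≤ f q + (dist z q + dist y z) := by
          have := dist_triangle y z q
          linarith
      _ = f q + dist z q + dist y z := by ring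
  have hg2lip : LipschitzWith 1 g2 := by
    apply LipschitzWith.of_le_add
    intro y z
    obtain ⟨p, hpA, hval, hub⟩ := hg2val y
    obtain ⟨p', hp'A, hval', hub'⟩ := hg2val z
    rw [hval, hval']
    have h1 : f p - dist z p ≤ f p' - dist z p' := hub' p hpA
    have h2 : dist z p ≤ dist z y + dist y p := dist_triangle z y p
    have h3 : dist z y = dist y z := dist_comm z y
    linarith
  have hg1eq : ∀ a ∈ A, g1 a = f a := by
    intro a ha
    obtain ⟨q, hqA, hval, hlb⟩ := hg1val a
    have h1 : f q + dist a q ≤ f a + dist a a := hlb a ha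
    rw [dist_self, add_zero] at h1
    have h2 : f a - f q ≤ dist a q := (abs_le.1 (hf a ha q hqA)).2
    rw [hval]
    linarith
  have hg2eq : ∀ a ∈ A, g2 a = f a := by
    intro a ha
    obtain ⟨p, hpA, hval, hub⟩ := hg2val a
    have h1 : f a - dist a a ≤ f p - dist a p := hub a ha
    rw [dist_self, sub_zero] at h1
    have h2 : f p - f a ≤ dist a p := (dist_comm a p) ▸ (abs_le.1 (hf p hpA a ha)).2
    rw [hval]
    linarith
  have key : g1 x = g2 x := hx g1 g2 hg1lip hg1eq hg2lip hg2eq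
  obtain ⟨q, hqA, hvq, _⟩ := hg1val x
  obtain ⟨p, hpA, hvp, _⟩ := hg2val x
  have keq : f q + dist x q = f p - dist x p := by rw [← hvq, ← hvp, key]
  have h1 : f p - f q ≤ dist p q := (abs_le.1 (hf p hpA q hqA)).2
  have h2 : dist p q ≤ dist p x + dist x q := dist_triangle p x q
  have h3 : dist p x = dist x p := dist_comm p x
  exact ⟨p, hpA, q, hqA, by linarith, by linarith⟩
end

section
/- Let A ⊆ M, f: A → ℝ be 1-Lipschitz, and let x ≠ y be points of M. Suppose the difference F(x) − F(y) takes the same value for all 1-Lipschitz extensions F of f to M. Then both x and y belong to the set S(A,f) of points where all 1-Lipschitz extensions of f coincide. -/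
theorem stmt4 {M : Type*} [MetricSpace M] (A : Set M) (hA : A.Nonempty)
    (f : M → ℝ) (hf : ∀ p ∈ A, ∀ q ∈ A, |f p - f q| ≤ dist p q)
    (x y : M) (hxy : x ≠ y)
    (h : ∀ F G : M → ℝ, LipschitzWith 1 F → (∀ a ∈ A, F a = f a) →
      LipschitzWith 1 G → (∀ a ∈ A, G a = f a) → F x - F y = G x - G y) :
    (∀ F G : M → ℝ, LipschitzWith 1 F → (∀ a ∈ A, F a = f a) →
      LipschitzWith 1 G → (∀ a ∈ A, G a = f a) → F x = G x) ∧
    (∀ F G : M → ℝ, LipschitzWith 1 F → (∀ a ∈ A, F a = f a) →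
      LipschitzWith 1 G → (∀ a ∈ A, G a = f a) → F y = G y) := by
  suffices key : ∀ F G : M → ℝ, LipschitzWith 1 F → (∀ a ∈ A, F a = f a) →
      LipschitzWith 1 G → (∀ a ∈ A, G a = f a) → F x = G x by
    refine ⟨key, ?_⟩
    intro F G hF hFA hG hGA
    have h1 := h F G hF hFA hG hGA
    have h2 := key F G hF hFA hG hGA
    linarith
  suffices k2 : ∀ P Q : M → ℝ, LipschitzWith 1 P → (∀ a ∈ A, P a = f a) →
      LipschitzWith 1 Q → (∀ a ∈ A, Q a = f a) → P x < Q x → False by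
    intro F G hF hFA hG hGA
    by_contra hne
    rcases lt_or_gt_of_ne hne with hlt | hgt
    · exact k2 F G hF hFA hG hGA hlt
    · exact k2 G F hG hGA hF hFA hgt
  intro P Q hP hPA hQ hQA hlt
  -- cone extensions
  have cone : ∀ w : M, LipschitzWith 1 (fun z => min (Q z) (dist z w + P w)) := by
    intro w
    have : (1 : NNReal) = 1 ⊔ 1 := by simp
    rw [this]
    refine hQ.min (LipschitzWith.mk_one fun a b => ?_)
    rw [Real.dist_eq, add_sub_add_right_eq_sub, ← Real.dist_eq]
    rw [Real.dist_eq]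
    exact abs_dist_sub_le a b w
  have coneA : ∀ w : M, ∀ a ∈ A, (fun z => min (Q z) (dist z w + P w)) a = f a := by
    intro w a ha
    have hd := hP.dist_le_mul a w
    rw [Real.dist_eq] at hd
    simp only [NNReal.coe_one, one_mul] at hd
    have hle : f a ≤ dist a w + P w := by
      have := abs_le.mp hd
      have := hPA a ha
      linarith [this, (abs_le.mp hd).2]
    simp only
    rw [hQA a ha, min_eq_left hle]
  have hQyPy : P y < Q y := by
    have := h P Q hP hPA hQ hQA
    linarith
  -- first cone at x
  have hx1 : P y = dist y x + P x := by
    have hh := h (fun z => min (Q z) (dist z x + P x)) P (cone x) (coneA x) hP hPA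
    have hxv : min (Q x) (dist x x + P x) = P x := by
      rw [dist_self, zero_add, min_eq_right hlt.le]
    rw [hxv] at hh
    have hyv : min (Q y) (dist y x + P x) = P y := by linarith
    rcases min_cases (Q y) (dist y x + P x) with ⟨he, _⟩ | ⟨he, _⟩
    · rw [he] at hyv; linarith
    · rw [he] at hyv; linarith
  -- second cone at y
  have hx2 : P x = dist x y + P y := by
    have hh := h (fun z => min (Q z) (dist z y + P y)) P (cone y) (coneA y) hP hPA
    have hyv : min (Q y) (dist y y + P y) = P y := by
      rw [dist_self, zero_add, min_eq_right hQyPy.le]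
    rw [hyv] at hh
    have hxv : min (Q x) (dist x y + P y) = P x := by linarith
    rcases min_cases (Q x) (dist x y + P y) with ⟨he, _⟩ | ⟨he, _⟩
    · rw [he] at hxv; linarith
    · rw [he] at hxv; linarith
  have hd0 : dist x y = 0 := by
    have : dist y x = dist x y := dist_comm y x
    linarith
  exact hxy (dist_eq_zero.mp hd0)
end

section
/- Let A ⊆ M be compact, f: A → ℝ be 1-Lipschitz, and p ∈ M a point where not all 1-Lipschitz extensions of f agree (i.e., E⁻f(p) < E⁺f(p)). Then there exist a 1-Lipschitz extension F of f to M, a constant η > 0, and a neighbourhood U of p, such that |F(x) − F(y)| ≤ (1 − η)·d(x,y) for all x ∈ A and y ∈ U. -/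
open Metric Filter Topology

section Convolution

variable {M : Type*} [MetricSpace M] {A : Set M} {f : M → ℝ}

theorem Set.Nonempty.of_supConv_lt_infConv {x : M} (h : supConv A f x < infConv A f x) :
    A.Nonempty := by
  by_contra hA
  have : IsEmpty A := Set.isEmpty_coe_sort.2 (Set.not_nonempty_iff_eq_empty.1 hA)
  simp [supConv, infConv] at h

variable (hf : LipschitzOnWith 1 f A) [Nonempty A]
include hf

theorem bddAbove_range_sub_dist (x : M) : BddAbove (Set.range fun q : A => f q - dist (q : M) x) := by
  obtain ⟨a, ha⟩ := ‹Nonempty A›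
  refine ⟨f a + dist a x, ?_⟩
  rintro _ ⟨⟨q, hq⟩, rfl⟩
  have hfq : f q ≤ f a + dist q a := by simpa using hf.le_add_mul hq ha
  linarith [dist_triangle_right q a x]

theorem bddBelow_range_add_dist (x : M) : BddBelow (Set.range fun q : A => f q + dist (q : M) x) := by
  obtain ⟨a, ha⟩ := ‹Nonempty A›
  refine ⟨f a - dist a x, ?_⟩
  rintro _ ⟨⟨q, hq⟩, rfl⟩
  have hfa : f a ≤ f q + dist a q := by simpa using hf.le_add_mul ha hq
  linarith [dist_triangle_right a q x]

theorem sub_dist_le_supConv {a : M} (ha : a ∈ A) (x : M) : f a - dist a x ≤ supConv A f x :=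
  le_ciSup (bddAbove_range_sub_dist hf x) ⟨a, ha⟩

theorem infConv_le_add_dist {a : M} (ha : a ∈ A) (x : M) : infConv A f x ≤ f a + dist a x :=
  ciInf_le (bddBelow_range_add_dist hf x) ⟨a, ha⟩

theorem supConv_of_mem {a : M} (ha : a ∈ A) : supConv A f a = f a := by
  refine le_antisymm (ciSup_le fun ⟨q, hq⟩ => ?_) (by simpa using sub_dist_le_supConv hf ha a)
  have hfq : f q ≤ f a + dist q a := by simpa using hf.le_add_mul hq ha
  linarith

theorem infConv_of_mem {a : M} (ha : a ∈ A) : infConv A f a = f a := by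
  refine le_antisymm (by simpa using infConv_le_add_dist hf ha a) (le_ciInf fun ⟨q, hq⟩ => ?_)
  have hfa : f a ≤ f q + dist a q := by simpa using hf.le_add_mul ha hq
  linarith [dist_comm a q]

theorem lipschitzWith_supConv : LipschitzWith 1 (supConv A f) :=
  LipschitzWith.of_le_add fun x y => ciSup_le fun ⟨q, hq⟩ => by
    linarith [sub_dist_le_supConv hf hq y, dist_triangle q x y]

theorem lipschitzWith_infConv : LipschitzWith 1 (infConv A f) :=
  LipschitzWith.of_le_add fun x y => sub_le_iff_le_add.1 <| le_ciInf fun ⟨q, hq⟩ => by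
    linarith [infConv_le_add_dist hf hq x, dist_triangle q y x, dist_comm x y]

end Convolution

noncomputable def midConv {M : Type*} [MetricSpace M] (A : Set M) (f : M → ℝ) (x : M) : ℝ :=
  (supConv A f x + infConv A f x) / 2

section MidConv

variable {M : Type*} [MetricSpace M] {A : Set M} {f : M → ℝ}
  (hf : LipschitzOnWith 1 f A) [Nonempty A]
include hf

theorem lipschitzWith_midConv : LipschitzWith 1 (midConv A f) :=
  LipschitzWith.of_le_add fun x y => by
    have hsup := (lipschitzWith_supConv hf).le_add_mul x y
    have hinf := (lipschitzWith_infConv hf).le_add_mul x y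
    simp only [NNReal.coe_one, one_mul] at hsup hinf
    unfold midConv
    linarith

theorem midConv_of_mem {a : M} (ha : a ∈ A) : midConv A f a = f a := by
  rw [midConv, supConv_of_mem hf ha, infConv_of_mem hf ha, add_self_div_two]

theorem abs_sub_midConv_le {a : M} (ha : a ∈ A) (y : M) :
    |f a - midConv A f y| ≤ dist a y - (infConv A f y - supConv A f y) / 2 := by
  have hsup := sub_dist_le_supConv hf ha y
  have hinf := infConv_le_add_dist hf ha y
  rw [abs_le, midConv]
  constructor <;> linarith

end MidConv

theorem Bornology.IsBounded.exists_pos_eventually_mul_dist_le {M : Type*} [MetricSpace M]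
    {A : Set M} (hA : IsBounded A) (p : M) {c : ℝ} (hc : 0 < c) :
    ∃ η > 0, ∀ᶠ y in 𝓝 p, ∀ x ∈ A, η * dist x y ≤ c := by
  obtain ⟨r, hr, hAr⟩ := hA.subset_closedBall_lt 0 p
  refine ⟨c / (r + 1), by positivity, ?_⟩
  filter_upwards [ball_mem_nhds p one_pos] with y hy x hx
  have hdist : dist x y ≤ r + 1 := by
    linarith [dist_triangle x p y, mem_closedBall.1 (hAr hx), dist_comm p y, mem_ball.1 hy]
  calc c / (r + 1) * dist x y ≤ c / (r + 1) * (r + 1) := by gcongr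
    _ = c := div_mul_cancel₀ c (by positivity)

theorem stmt5_general {M : Type*} [MetricSpace M] (A : Set M)
    (hAc : IsCompact A)
    (f : M → ℝ) (hf : ∀ p ∈ A, ∀ q ∈ A, |f p - f q| ≤ dist p q)
    (p : M) (hp : supConv A f p < infConv A f p) :
    ∃ (F : M → ℝ) (η : ℝ) (U : Set M), LipschitzWith 1 F ∧ (∀ a ∈ A, F a = f a) ∧
      0 < η ∧ U ∈ nhds p ∧
      ∀ x ∈ A, ∀ y ∈ U, |F x - F y| ≤ (1 - η) * dist x y := by
  have : Nonempty A := (Set.Nonempty.of_supConv_lt_infConv hp).to_subtype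
  have hfA : LipschitzOnWith 1 f A :=
    LipschitzOnWith.of_le_add fun x hx y hy => by linarith [le_abs_self (f x - f y), hf x hx y hy]
  set ε := (infConv A f p - supConv A f p) / 2
  have hε : 0 < ε := by simp only [ε]; linarith
  have hgap : ∀ᶠ y in 𝓝 p, ε < infConv A f y - supConv A f y :=
    ((lipschitzWith_infConv hfA).continuous.sub (lipschitzWith_supConv hfA).continuous).tendsto p
      |>.eventually_const_lt (half_lt_self (sub_pos.2 hp))
  obtain ⟨η, hη, hηdist⟩ := hAc.isBounded.exists_pos_eventually_mul_dist_le p (half_pos hε)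
  obtain ⟨U, hU, hUp⟩ := (hgap.and hηdist).exists_mem
  refine ⟨midConv A f, η, U, lipschitzWith_midConv hfA, fun a ha => midConv_of_mem hfA ha, hη, hU,
    fun x hx y hy => ?_⟩
  rw [midConv_of_mem hfA hx]
  linarith [abs_sub_midConv_le hfA hx y, (hUp y hy).1, (hUp y hy).2 x hx]

theorem stmt5 {M : Type*} [MetricSpace M] (A : Set M) (hA : A.Nonempty)
    (hAc : IsCompact A)
    (f : M → ℝ) (hf : ∀ p ∈ A, ∀ q ∈ A, |f p - f q| ≤ dist p q)
    (p : M) (hp : supConv A f p < infConv A f p) :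
    ∃ (F : M → ℝ) (η : ℝ) (U : Set M), LipschitzWith 1 F ∧ (∀ a ∈ A, F a = f a) ∧
      0 < η ∧ U ∈ nhds p ∧
      ∀ x ∈ A, ∀ y ∈ U, |F x - F y| ≤ (1 - η) * dist x y :=
  stmt5_general A hAc f hf p hp
end

section
/- Let E ⊆ M × M be cyclically monotonic and suppose (x₀,x₁), (x₁,x₂), …, (x_{n−1},x_n) ∈ E. Then for each k with 1 ≤ k ≤ n−1, the point x_k lies on the metric segment [x₀,x_n], i.e., d(x₀,x_k) + d(x_k,x_n) = d(x₀,x_n). -/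
def CyclicallyMonotone {M : Type*} [MetricSpace M] (E : Set (M × M)) : Prop :=
  ∀ (n : ℕ) (x y : Fin (n + 1) → M), (∀ i, (x i, y i) ∈ E) →
    ∑ i, dist (x i) (y i) ≤ ∑ i, dist (x i) (y (i + 1))

lemma chain_sum_le {M : Type*} [MetricSpace M] (E : Set (M × M))
    (hE : CyclicallyMonotone E) (n : ℕ) (x : ℕ → M)
    (hx : ∀ i < n + 1, (x i, x (i + 1)) ∈ E) :
    ∑ i ∈ Finset.range (n + 1), dist (x i) (x (i + 1)) ≤ dist (x 0) (x (n + 1)) := by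
  have h := hE n (fun i => x (n - i)) (fun i => x (n + 1 - i)) (by
    intro i
    have hi : (i : ℕ) ≤ n := Nat.lt_succ_iff.mp i.isLt
    have : n + 1 - (i : ℕ) = (n - i) + 1 := by omega
    simp only [this]
    exact hx _ (by omega))
  have hL : ∑ i : Fin (n + 1), dist (x (n - (i:ℕ))) (x (n + 1 - (i:ℕ)))
      = ∑ i ∈ Finset.range (n + 1), dist (x i) (x (i + 1)) := by
    rw [Fin.sum_univ_eq_sum_range (fun i => dist (x (n - i)) (x (n + 1 - i)))]
    rw [← Finset.sum_range_reflect (fun i => dist (x i) (x (i + 1))) (n+1)]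
    apply Finset.sum_congr rfl
    intro i hi
    simp only [Finset.mem_range] at hi
    have h1 : n + 1 - 1 - i = n - i := by omega
    have h2 : n + 1 - i = n - i + 1 := by omega
    rw [h1, h2]
  have hR : ∑ i : Fin (n + 1), dist (x (n - (i:ℕ))) (x (n + 1 - ((i + 1 : Fin (n+1)):ℕ)))
      = dist (x 0) (x (n + 1)) := by
    rw [Fin.sum_univ_castSucc]
    have hlast : ∑ i : Fin n, dist (x (n - ((i.castSucc : Fin (n+1)):ℕ)))
        (x (n + 1 - ((i.castSucc + 1 : Fin (n+1)):ℕ))) = 0 := by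
      apply Finset.sum_eq_zero
      intro i _
      have hi : (i : ℕ) < n := i.isLt
      have hv : ((i.castSucc + 1 : Fin (n+1)) : ℕ) = (i : ℕ) + 1 := by
        rw [Fin.val_add_one]
        have : i.castSucc ≠ Fin.last n := by
          simp [Fin.ext_iff, Fin.val_last]; omega
        simp [this]
      rw [hv]
      have : n + 1 - ((i:ℕ) + 1) = n - i := by omega
      rw [this]
      simp
    rw [hlast]
    have hv : ((Fin.last n + 1 : Fin (n+1)) : ℕ) = 0 := by
      rw [Fin.val_add_one]; simp
    simp [hv]
  rw [hL, hR] at h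
  exact h
theorem stmt7 {M : Type*} [MetricSpace M] (E : Set (M × M))
    (hE : CyclicallyMonotone E)
    (n : ℕ) (x : ℕ → M) (hx : ∀ i < n, (x i, x (i + 1)) ∈ E)
    (k : ℕ) (hk₁ : 1 ≤ k) (hk₂ : k ≤ n - 1) :
    dist (x 0) (x k) + dist (x k) (x n) = dist (x 0) (x n) := by
  have hn : 2 ≤ n := by omega
  obtain ⟨m, rfl⟩ : ∃ m, n = m + 1 := ⟨n - 1, by omega⟩
  have hsum := chain_sum_le E hE m x (by intro i hi; exact hx i hi)
  have h1 : dist (x 0) (x k) ≤ ∑ i ∈ Finset.range k, dist (x i) (x (i + 1)) :=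
    dist_le_range_sum_dist x k
  have h2 : dist (x k) (x (m + 1)) ≤
      ∑ i ∈ Finset.range (m + 1 - k), dist (x (k + i)) (x (k + i + 1)) := by
    have := dist_le_range_sum_dist (fun i => x (k + i)) (m + 1 - k)
    have hk : k + (m + 1 - k) = m + 1 := by omega
    rw [hk] at this
    exact this
  have hsplit : ∑ i ∈ Finset.range (m + 1), dist (x i) (x (i + 1))
      = ∑ i ∈ Finset.range k, dist (x i) (x (i + 1))
        + ∑ i ∈ Finset.range (m + 1 - k), dist (x (k + i)) (x (k + i + 1)) := by
    have hk : m + 1 = k + (m + 1 - k) := by omega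
    rw [hk, Finset.sum_range_add]
    simp
  have htri : dist (x 0) (x (m + 1)) ≤ dist (x 0) (x k) + dist (x k) (x (m + 1)) :=
    dist_triangle _ _ _
  linarith [hsum, hsplit ▸ hsum]
end

section
/- Let E ⊆ M × M be cyclically monotonic and suppose (x₀,x₁), (x₁,x₂), …, (x_{n−1},x_n) ∈ E. Then d(x₀,x₁) + d(x₁,x₂) + ⋯ + d(x_{n−1},x_n) ≤ d(x₀,x_n); in particular equality holds, so the path x₀, x₁, …, x_n is a geodesic chain with total length d(x₀,x_n). -/
theorem stmt8 {M : Type*} [MetricSpace M] (E : Set (M × M))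
    (hE : CyclicallyMonotone E)
    (n : ℕ) (x : ℕ → M) (hx : ∀ i < n, (x i, x (i + 1)) ∈ E) :
    (∑ i ∈ Finset.range n, dist (x i) (x (i + 1)) ≤ dist (x 0) (x n)) ∧
    (∑ i ∈ Finset.range n, dist (x i) (x (i + 1)) = dist (x 0) (x n)) := by
  have key : ∑ i ∈ Finset.range n, dist (x i) (x (i + 1)) = dist (x 0) (x n) := by
    rcases n with _ | m
    · simp
    · apply le_antisymm
      · have h := hE m (fun i => x (m - i.val)) (fun i => x (m + 1 - i.val))
          (fun i => by
            have hi : i.val ≤ m := Nat.lt_succ_iff.mp i.isLt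
            have h1 : m + 1 - i.val = (m - i.val) + 1 := by omega
            show (x (m - i.val), x (m + 1 - i.val)) ∈ E
            rw [h1]
            exact hx _ (by omega))
        calc ∑ i ∈ Finset.range (m + 1), dist (x i) (x (i + 1))
            = ∑ i : Fin (m + 1), dist (x (m - i.val)) (x (m + 1 - i.val)) := by
              rw [Fin.sum_univ_eq_sum_range (fun i => dist (x (m - i)) (x (m + 1 - i))),
                ← Finset.sum_range_reflect]
              apply Finset.sum_congr rfl
              intro j hj
              have hj' : j ≤ m := Nat.lt_succ_iff.mp (Finset.mem_range.mp hj)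
              have : m + 1 - 1 - j = m - j := by omega
              rw [this, show m - j + 1 = m + 1 - j by omega]
          _ ≤ ∑ i : Fin (m + 1), dist (x (m - i.val)) (x (m + 1 - ((i + 1 : Fin (m + 1))).val)) := h
          _ = dist (x 0) (x (m + 1)) := by
              rw [Finset.sum_eq_single_of_mem (Fin.last m) (Finset.mem_univ _)]
              · have h1 : ((Fin.last m) + 1 : Fin (m + 1)).val = 0 := by
                  simp [Fin.add_def]
                rw [h1]
                simp [Fin.last]
              · intro i _ hi
                have hilt : i.val < m := by
                  rcases Nat.lt_succ_iff_lt_or_eq.mp i.isLt with h' | h'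
                  · exact h'
                  · exact absurd (Fin.ext h') hi
                have h1 : ((i + 1 : Fin (m + 1))).val = i.val + 1 := by
                  simp [Fin.add_def, Nat.mod_eq_of_lt (by omega : i.val + 1 < m + 1)]
                rw [h1]
                have : m + 1 - (i.val + 1) = m - i.val := by omega
                rw [this]
                simp
      · exact dist_le_range_sum_dist x (m + 1)
  exact ⟨key.le, key⟩
end

section
/- Let (aₙ)ₙ be a sequence of nonnegative reals and (pₙ)ₙ a sequence in (0,1], and let ω(t) = t^θ with θ ∈ (0,1). Suppose that for every c ∈ (0,1], ∑_{n : pₙ > c} aₙ/ω(pₙ) = 1 − c. Then aₖ = 0 for every k; in particular no such representation exists with all aₙ > 0. -/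
theorem stmt14 (θ : ℝ) (hθ : θ ∈ Set.Ioo (0:ℝ) 1)
    (a : ℕ → ℝ) (ha : ∀ n, 0 ≤ a n)
    (p : ℕ → ℝ) (hp : ∀ n, p n ∈ Set.Ioc (0:ℝ) 1)
    (h : ∀ c ∈ Set.Ioc (0:ℝ) 1,
      (∑' n : ℕ, if c < p n then a n / (p n) ^ θ else 0) = 1 - c) :
    ∀ k, a k = 0 := by
  intro k
  by_contra hak
  obtain ⟨hPpos, hPle⟩ := hp k
  set P := p k with hPdef
  have hPθ : (0:ℝ) < P ^ θ := Real.rpow_pos_of_pos hPpos θ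
  set A : ℝ := a k / P ^ θ with hA
  have hApos : 0 < A := div_pos (lt_of_le_of_ne (ha k) (Ne.symm hak)) hPθ
  set c : ℝ := max (P - A/2) (P/2) with hc
  have hcP : c < P := max_lt (by linarith) (by linarith)
  have hc0 : 0 < c := lt_of_lt_of_le (by linarith) (le_max_right _ _)
  have hc1 : c ≤ 1 := le_of_lt (lt_of_lt_of_le hcP hPle)
  set f : ℕ → ℝ := fun n => if c < p n then a n / (p n) ^ θ else 0 with hf
  set g : ℕ → ℝ := fun n => if P < p n then a n / (p n) ^ θ else 0 with hg
  set w : ℕ → ℝ := fun n => if c < p n ∧ ¬ P < p n then a n / (p n) ^ θ else 0 with hw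
  have hterm : ∀ n, 0 ≤ a n / (p n) ^ θ := fun n =>
    div_nonneg (ha n) (Real.rpow_pos_of_pos (hp n).1 θ).le
  have hfg : ∀ n, f n = g n + w n := by
    intro n
    simp only [hf, hg, hw]
    by_cases h1 : P < p n
    · have h2 : c < p n := lt_trans hcP h1
      simp [h1, h2]
    · by_cases h2 : c < p n
      · simp [h1, h2]
      · simp [h1, h2]
  have hfnn : ∀ n, 0 ≤ f n := by
    intro n; simp only [hf]; split_ifs; exacts [hterm n, le_refl 0]
  have hgnn : ∀ n, 0 ≤ g n := by
    intro n; simp only [hg]; split_ifs; exacts [hterm n, le_refl 0]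
  have hwnn : ∀ n, 0 ≤ w n := by
    intro n; simp only [hw]; split_ifs; exacts [hterm n, le_refl 0]
  have htf : ∑' n, f n = 1 - c := h c ⟨hc0, hc1⟩
  have htg : ∑' n, g n = 1 - P := h P ⟨hPpos, hPle⟩
  have hfs : Summable f := by
    by_contra hns
    rw [tsum_eq_zero_of_not_summable hns] at htf
    linarith
  have hgle : ∀ n, g n ≤ f n := fun n => by
    rw [hfg n]; linarith [hwnn n]
  have hgs : Summable g := Summable.of_nonneg_of_le hgnn hgle hfs
  have hws : Summable w := by
    have : w = fun n => f n - g n := by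
      funext n; rw [hfg n]; ring
    rw [this]; exact hfs.sub hgs
  have htw : ∑' n, w n = P - c := by
    have : ∑' n, f n = ∑' n, (g n + w n) := by
      exact tsum_congr hfg
    rw [Summable.tsum_add hgs hws, htf, htg] at this
    linarith
  have hwk : w k = A := by
    simp only [hw]
    rw [if_pos ⟨hcP, lt_irrefl P⟩]
  have hle : A ≤ P - c := by
    rw [← hwk, ← htw]
    exact Summable.le_tsum hws k (fun n _ => hwnn n)
  have : P - c ≤ A / 2 := by
    have := le_max_left (P - A/2) (P/2)
    linarith [this.trans_eq hc.symm.symm, le_max_left (P - A/2) (P/2)]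
  linarith
end
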